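/- Let H be a real normed vector space, λ ≥ 0 and Z ∈ H. The soft functional thresholding rule s^S_λ(Z) minimizes the penalized quadratic loss with ℓ1/ℓ2-type penalty: for every θ ∈ H, (1/2)‖s^S_λ(Z) − Z‖² + λ‖s^S_λ(Z)‖ ≤ (1/2)‖θ − Z‖² + λ‖θ‖. -/

import Mathlib

/-!
Write `r = ‖Z‖`. Since `softThresh lam Z` is `Z` shrunk by a factor in `[0, 1]`, it has norm
`(r - λ)₊` and lies at distance `r - (r - λ)₊` from `Z`, so the left-hand side is the value of
the scalar loss `t ↦ ½ (t - r)² + λ t` at `t = (r - λ)₊`, its minimiser over `t ≥ 0`. The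
right-hand side dominates the same scalar loss at `t = ‖θ‖`, because `|‖θ‖ - ‖Z‖| ≤ ‖θ - Z‖`.
-/

/-- Soft functional thresholding rule: `s^S_λ(Z) = (1 − λ/‖Z‖)₊ • Z` (and `0` at `Z = 0`). -/
noncomputable def softThresh {H : Type*} [NormedAddCommGroup H] [NormedSpace ℝ H]
    (lam : ℝ) (Z : H) : H :=
  (max (1 - lam / ‖Z‖) 0) • Z

noncomputable def scalarPenalizedLoss (lam r t : ℝ) : ℝ := 1 / 2 * (t - r) ^ 2 + lam * t

theorem scalarPenalizedLoss_max_sub_le (lam r : ℝ) {t : ℝ} (ht : 0 ≤ t) :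
    scalarPenalizedLoss lam r (max (r - lam) 0) ≤ scalarPenalizedLoss lam r t := by
  unfold scalarPenalizedLoss
  rcases le_total lam r with hle | hle
  · rw [max_eq_left (sub_nonneg.mpr hle)]
    nlinarith [sq_nonneg (t - r + lam)]
  · rw [max_eq_right (sub_nonpos.mpr hle)]
    nlinarith [mul_nonneg ht (sub_nonneg.mpr hle)]

theorem max_one_sub_div_zero_mem_Icc {lam r : ℝ} (hlam : 0 ≤ lam) (hr : 0 ≤ r) :
    max (1 - lam / r) 0 ∈ Set.Icc (0 : ℝ) 1 :=
  ⟨le_max_right _ _, max_le (by linarith [div_nonneg hlam hr]) zero_le_one⟩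

section NormedSpace

variable {H : Type*} [NormedAddCommGroup H] [NormedSpace ℝ H]

theorem norm_smul_sub_self {c : ℝ} (hc0 : 0 ≤ c) (hc1 : c ≤ 1) (Z : H) :
    ‖c • Z - Z‖ = ‖Z‖ - ‖c • Z‖ := by
  have hZc : Z - c • Z = (1 - c) • Z := by rw [sub_smul, one_smul]
  rw [norm_sub_rev, hZc, norm_smul, norm_smul, Real.norm_of_nonneg hc0,
    Real.norm_of_nonneg (sub_nonneg.mpr hc1)]
  ring

variable {lam : ℝ}

theorem norm_softThresh (hlam : 0 ≤ lam) (Z : H) :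
    ‖softThresh lam Z‖ = max (‖Z‖ - lam) 0 := by
  rcases eq_or_ne Z 0 with rfl | hZ
  · simp [softThresh, hlam]
  have hr : ‖Z‖ ≠ 0 := norm_ne_zero_iff.mpr hZ
  rw [softThresh, norm_smul,
    Real.norm_of_nonneg (max_one_sub_div_zero_mem_Icc hlam (norm_nonneg Z)).1,
    max_mul_of_nonneg _ _ (norm_nonneg Z), sub_mul, div_mul_cancel₀ _ hr, one_mul, zero_mul]

theorem norm_softThresh_sub_self (hlam : 0 ≤ lam) (Z : H) :
    ‖softThresh lam Z - Z‖ = ‖Z‖ - ‖softThresh lam Z‖ :=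
  have hc := max_one_sub_div_zero_mem_Icc hlam (norm_nonneg Z)
  norm_smul_sub_self hc.1 hc.2 Z

end NormedSpace

theorem softThresh_min_penalized_loss {H : Type*} [NormedAddCommGroup H] [NormedSpace ℝ H]
    (lam : ℝ) (hlam : 0 ≤ lam) (Z : H) :
    ∀ θ : H,
      (1 / 2) * ‖softThresh lam Z - Z‖ ^ 2 + lam * ‖softThresh lam Z‖ ≤
        (1 / 2) * ‖θ - Z‖ ^ 2 + lam * ‖θ‖ := by
  intro θ
  have hdist : (‖θ‖ - ‖Z‖) ^ 2 ≤ ‖θ - Z‖ ^ 2 :=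
    sq_le_sq.mpr (by rw [abs_norm]; exact abs_norm_sub_norm_le θ Z)
  calc (1 / 2) * ‖softThresh lam Z - Z‖ ^ 2 + lam * ‖softThresh lam Z‖
      = scalarPenalizedLoss lam ‖Z‖ (max (‖Z‖ - lam) 0) := by
        rw [norm_softThresh_sub_self hlam, norm_softThresh hlam, scalarPenalizedLoss]
        ring
    _ ≤ scalarPenalizedLoss lam ‖Z‖ ‖θ‖ :=
        scalarPenalizedLoss_max_sub_le lam ‖Z‖ (norm_nonneg θ)
    _ ≤ (1 / 2) * ‖θ - Z‖ ^ 2 + lam * ‖θ‖ := by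
        rw [scalarPenalizedLoss]
        gcongr
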